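/- arXiv:1805.06106 — 2 statements merged into one kernel-verified Lean document; each statement's English description precedes it below -/
import Mathlib

section
/- Let w : ℝ → ℂ be three times continuously differentiable on a neighborhood of t ∈ ℝ with deriv w nonvanishing on that neighborhood, and let σ : ℂ → ℂ be complex-differentiable of class C² on a neighborhood of w(t). Then deriv (fun τ => (deriv (fun u => σ (w u) / deriv w u) τ) / deriv w τ) t = (deriv (deriv σ)) (w t) − 2 · (deriv (deriv w) t) · (deriv σ (w t)) / (deriv w t)^2 − (deriv (deriv (deriv w)) t) · σ (w t) / (deriv w t)^3 + 3 · σ (w t) · (deriv (deriv w) t)^2 / (deriv w t)^4. -/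
/-!
One application of `D_t` to `σ ∘ w` gives the closed form `σ'(w) - σ(w) w''/w'²`, valid on a whole
neighbourhood of `t`. Dividing it by `w'` splits it as `σ'(w)/w' - σ(w) · (w''/w'³)`: the first
term is again `σ' ∘ w` over `w'`, differentiated by the same one-step formula, and the second is
handled by the product and quotient rules.
-/

open Filter Topology

section
variable {𝕜 𝕜' : Type*} [NontriviallyNormedField 𝕜] [NontriviallyNormedField 𝕜']
  [NormedAlgebra 𝕜 𝕜']

noncomputable def Dt (w g : 𝕜 → 𝕜') : 𝕜 → 𝕜' :=
  deriv fun u => g u / deriv w u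

theorem hasDerivAt_comp_div_deriv {w : 𝕜 → 𝕜'} {σ : 𝕜' → 𝕜'} {τ : 𝕜} {σ₁ w₂ : 𝕜'}
    (hσ : HasDerivAt σ σ₁ (w τ)) (hw : DifferentiableAt 𝕜 w τ)
    (hw' : HasDerivAt (deriv w) w₂ τ) (hne : deriv w τ ≠ 0) :
    HasDerivAt (fun u => σ (w u) / deriv w u) (σ₁ - σ (w τ) * w₂ / deriv w τ ^ 2) τ := by
  refine ((hσ.comp τ hw.hasDerivAt).div hw' hne).congr_deriv ?_
  simp only [Function.comp_apply]
  field_simp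

theorem hasDerivAt_Dt_comp_div_deriv {w : 𝕜 → 𝕜'} {σ : 𝕜' → 𝕜'} {t : 𝕜} {σ₂ w₃ : 𝕜'}
    (hσ : DifferentiableAt 𝕜' σ (w t)) (hσ' : HasDerivAt (deriv σ) σ₂ (w t))
    (hw : DifferentiableAt 𝕜 w t) (hw' : DifferentiableAt 𝕜 (deriv w) t)
    (hw'' : HasDerivAt (deriv (deriv w)) w₃ t) (hne : deriv w t ≠ 0) :
    HasDerivAt (fun τ => (deriv σ (w τ) - σ (w τ) * deriv (deriv w) τ / deriv w τ ^ 2) / deriv w τ)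
      (σ₂ - 2 * deriv (deriv w) t * deriv σ (w t) / deriv w t ^ 2
        - w₃ * σ (w t) / deriv w t ^ 3
        + 3 * σ (w t) * deriv (deriv w) t ^ 2 / deriv w t ^ 4) t := by
  have hsplit : (fun τ => (deriv σ (w τ) - σ (w τ) * deriv (deriv w) τ / deriv w τ ^ 2) / deriv w τ)
      = fun τ => deriv σ (w τ) / deriv w τ - σ (w τ) * (deriv (deriv w) τ / deriv w τ ^ 3) := by
    funext τ
    ring
  have hfirst := hasDerivAt_comp_div_deriv hσ' hw hw'.hasDerivAt hne
  have hsecond := (hσ.hasDerivAt.comp t hw.hasDerivAt).mul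
    (hw''.div (hw'.hasDerivAt.pow 3) (pow_ne_zero 3 hne))
  rw [hsplit]
  refine (hfirst.sub hsecond).congr_deriv ?_
  simp only [Function.comp_apply, Pi.div_apply, Pi.pow_apply]
  field_simp
  ring

end

/-- Second iterate of the operator `D_t g = ∂_t [g(t)/w'(t)]` applied to `σ ∘ w`:
`D_t²[σ(w(t))] = σ''(w) - 2 w'' σ'(w)/w'² - w''' σ(w)/w'³ + 3 σ(w) w''²/w'⁴`. -/
theorem Dt_second_iterate (w : ℝ → ℂ) (σ : ℂ → ℂ) (t : ℝ)
    (U : Set ℝ) (hU : U ∈ nhds t) (hw : ContDiffOn ℝ 3 w U)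
    (hne : ∀ τ ∈ U, deriv w τ ≠ 0)
    (V : Set ℂ) (hV : V ∈ nhds (w t)) (hσ : ContDiffOn ℂ 2 σ V) :
    deriv (fun τ => (deriv (fun u => σ (w u) / deriv w u) τ) / deriv w τ) t =
      (deriv (deriv σ)) (w t)
        - 2 * (deriv (deriv w) t) * (deriv σ (w t)) / (deriv w t) ^ 2
        - (deriv (deriv (deriv w)) t) * σ (w t) / (deriv w t) ^ 3
        + 3 * σ (w t) * (deriv (deriv w) t) ^ 2 / (deriv w t) ^ 4 := by
  have hwU : ∀ᶠ τ in 𝓝 t, ContDiffAt ℝ 3 w τ ∧ deriv w τ ≠ 0 :=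
    (eventually_mem_nhds_iff.2 hU).mono fun τ hτ => ⟨hw.contDiffAt hτ, hne τ (mem_of_mem_nhds hτ)⟩
  have hσV : ∀ᶠ z in 𝓝 (w t), ContDiffAt ℂ 2 σ z :=
    (eventually_mem_nhds_iff.2 hV).mono fun z hz => hσ.contDiffAt hz
  obtain ⟨hwt, hnet⟩ := hwU.self_of_nhds
  have hσt := hσV.self_of_nhds
  have hw' (τ) (h : ContDiffAt ℝ 3 w τ) : ContDiffAt ℝ 2 (deriv w) τ := h.derivWithin (by norm_num)
  have hw''t : ContDiffAt ℝ 1 (deriv (deriv w)) t := (hw' t hwt).derivWithin (by norm_num)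
  have hσ't : ContDiffAt ℂ 1 (deriv σ) (w t) := hσt.derivWithin (by norm_num)
  have hDt_eq : Dt w (fun u => σ (w u)) =ᶠ[𝓝 t]
      fun τ => deriv σ (w τ) - σ (w τ) * deriv (deriv w) τ / deriv w τ ^ 2 := by
    filter_upwards [hwU, hwt.continuousAt.eventually hσV] with τ ⟨hwτ, hneτ⟩ hστ
    exact (hasDerivAt_comp_div_deriv (hστ.differentiableAt (by norm_num)).hasDerivAt
      (hwτ.differentiableAt (by norm_num))
      ((hw' τ hwτ).differentiableAt (by norm_num)).hasDerivAt hneτ).deriv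
  change deriv (fun τ => Dt w (fun u => σ (w u)) τ / deriv w τ) t = _
  rw [EventuallyEq.deriv_eq (hDt_eq.mono fun τ hτ => congrArg (· / deriv w τ) hτ)]
  exact (hasDerivAt_Dt_comp_div_deriv (hσt.differentiableAt (by norm_num))
    (hσ't.differentiableAt (by norm_num)).hasDerivAt (hwt.differentiableAt (by norm_num))
    ((hw' t hwt).differentiableAt (by norm_num)) (hw''t.differentiableAt (by norm_num)).hasDerivAt
    hnet).deriv
end

section
/- Work in E = EuclideanSpace ℝ (Fin 3). Let r > 0 and t_f ≥ 0 be real numbers with t_f < 2√3 − 2, and let c_s, c_t, s, t ∈ E. Suppose ‖c_s − c_t‖ ≥ 6r, ‖s − c_s‖ ≤ √3 · r, and ‖t − c_t‖ ≤ √3 · (1 + t_f) · r. Then ‖s − c_t‖ ≥ (6 − √3) · r > 0, and ‖t − c_t‖ ≤ (√3 (1 + t_f)/(6 − √3)) · ‖s − c_t‖. -/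
/-- Convergence-factor calculation for List 2 interactions: for boxes of ℓ∞ radius
`r` with centers `c_s`, `c_t` at Euclidean distance at least `6r`, any source `s`
within `√3 r` of `c_s` and any target `t` in the target confinement region of the
target box (radius `√3 (1 + t_f) r` about `c_t`) satisfy
`‖s - c_t‖ ≥ (6 - √3) r > 0` and `‖t - c_t‖ ≤ (√3(1+t_f)/(6-√3)) ‖s - c_t‖`. -/
theorem list2_convergence_factor (r t_f : ℝ) (hr : 0 < r) (ht0 : 0 ≤ t_f)
    (ht : t_f < 2 * Real.sqrt 3 - 2)
    (c_s c_t s t : EuclideanSpace ℝ (Fin 3))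
    (hsep : ‖c_s - c_t‖ ≥ 6 * r)
    (hs : ‖s - c_s‖ ≤ Real.sqrt 3 * r)
    (htgt : ‖t - c_t‖ ≤ Real.sqrt 3 * (1 + t_f) * r) :
    ‖s - c_t‖ ≥ (6 - Real.sqrt 3) * r ∧ (6 - Real.sqrt 3) * r > 0 ∧
      ‖t - c_t‖ ≤ (Real.sqrt 3 * (1 + t_f) / (6 - Real.sqrt 3)) * ‖s - c_t‖ := by

  have h3 : Real.sqrt 3 < 2 := by
    nlinarith [Real.sq_sqrt (by norm_num : (3:ℝ) ≥ 0), Real.sqrt_nonneg 3]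
  have h3' : (0:ℝ) < Real.sqrt 3 := Real.sqrt_pos.mpr (by norm_num)
  have hpos : (0:ℝ) < (6 - Real.sqrt 3) * r := by nlinarith
  have hlow : ‖s - c_t‖ ≥ (6 - Real.sqrt 3) * r := by
    have htri : ‖c_s - c_t‖ ≤ ‖c_s - s‖ + ‖s - c_t‖ := norm_sub_le_norm_sub_add_norm_sub _ _ _
    have : ‖c_s - s‖ = ‖s - c_s‖ := norm_sub_rev _ _
    nlinarith
  refine ⟨hlow, hpos, ?_⟩
  rw [div_mul_eq_mul_div, le_div_iff₀ (by linarith)]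
  have h1 : 0 ≤ Real.sqrt 3 * (1 + t_f) := by positivity
  calc ‖t - c_t‖ * (6 - Real.sqrt 3) ≤ (Real.sqrt 3 * (1 + t_f) * r) * (6 - Real.sqrt 3) := by
        apply mul_le_mul_of_nonneg_right htgt (by linarith)
    _ = Real.sqrt 3 * (1 + t_f) * ((6 - Real.sqrt 3) * r) := by ring
    _ ≤ Real.sqrt 3 * (1 + t_f) * ‖s - c_t‖ := mul_le_mul_of_nonneg_left hlow h1
end
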